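/- The integral $\int_0^\infty \int_{-\infty}^{\infty} \overline{\Phi}(|z - y| + y)^2 / \varphi(z)\, dz\, dy$ equals $(\sqrt{2} - \log(1 + \sqrt{2}))/\sqrt{\pi}$. -/

import Mathlib

/-!
Write `Ψ z = ∫₀ᶻ 1/φ`. For fixed `y`, the reflection `z ↦ 2y - z` folds the inner integral onto
`z > y`, where the integrand becomes `Φ̄(z)² (1/φ(z) + 1/φ(2y - z))`. Exchanging the order of
integration over `0 < y < z` and using that `φ` is even leaves `∫₀^∞ Φ̄² (z/φ + Ψ)`.
This integrand plus `2 φ² Ψ` is the derivative of `Φ̄² z Ψ - 2 φ Φ̄ Ψ + 2 (z Φ̄ - φ)`, which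
tends to `0` at infinity by the Mills ratio bound `z Φ̄(z) ≤ φ(z)` and equals `-2 φ(0)` at `0`.
Finally, substituting `t = s z` in `Ψ` and exchanging integrals,
`∫₀^∞ φ² Ψ = (2π)^{-1/2} ∫₀¹ ds / (2 - s²) = log(1 + √2) / (2√π)`.
-/

noncomputable def stdPhi (z : ℝ) : ℝ := (Real.sqrt (2 * Real.pi))⁻¹ * Real.exp (-z ^ 2 / 2)

noncomputable def stdPhiBar (z : ℝ) : ℝ := ∫ u in Set.Ioi z, stdPhi u

open MeasureTheory Set Filter Real
open scoped Topology ENNReal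

lemma lintegral_eq_setLIntegral_Ioi_add_reflection {g : ℝ → ℝ≥0∞} (hg : Measurable g) (y : ℝ) :
    ∫⁻ z, g z = ∫⁻ z in Ioi y, (g z + g (2 * y - z)) := by
  have hrefl : ∫⁻ z in Ioi y, g (2 * y - z) = ∫⁻ z in Iio y, g z := by
    have hpre : (fun z => 2 * y - z) ⁻¹' Iio y = Ioi y := by
      ext z; simp only [mem_preimage, mem_Iio, mem_Ioi]; constructor <;> intro h <;> linarith
    rw [← hpre]
    exact (Measure.measurePreserving_sub_left volume (2 * y)).setLIntegral_comp_preimage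
      measurableSet_Iio hg
  rw [lintegral_add_left hg, hrefl, ← lintegral_union measurableSet_Iio (Ioi_disjoint_Iio_same),
    union_comm, Iio_union_Ioi, restrict_compl_singleton]

lemma setLIntegral_Ioi_setLIntegral_Ioi_swap {μ : Measure ℝ} [SFinite μ] {F : ℝ → ℝ → ℝ≥0∞}
    (hF : Measurable (Function.uncurry F)) (a : ℝ) :
    ∫⁻ y in Ioi a, ∫⁻ z in Ioi y, F y z ∂μ ∂μ = ∫⁻ z in Ioi a, ∫⁻ y in Ioo a z, F y z ∂μ ∂μ := by
  let G : ℝ → ℝ → ℝ≥0∞ := fun y z => if a < y ∧ y < z then F y z else 0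
  have hG : Measurable (Function.uncurry G) :=
    Measurable.ite (measurableSet_lt measurable_const measurable_fst |>.inter
      (measurableSet_lt measurable_fst measurable_snd)) hF measurable_const
  have hL (y : ℝ) :
      (Ioi a).indicator (fun y => ∫⁻ z in Ioi y, F y z ∂μ) y = ∫⁻ z, G y z ∂μ := by
    by_cases hy : a < y
    · rw [indicator_of_mem (mem_Ioi.2 hy), ← lintegral_indicator measurableSet_Ioi]
      congr 1 with z
      simp [G, indicator_apply, hy]
    · simp [G, hy]
  have hR (z : ℝ) :
      (Ioi a).indicator (fun z => ∫⁻ y in Ioo a z, F y z ∂μ) z = ∫⁻ y, G y z ∂μ := by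
    by_cases hz : a < z
    · rw [indicator_of_mem (mem_Ioi.2 hz), ← lintegral_indicator measurableSet_Ioo]
      congr 1 with y
      simp [G, indicator_apply]
    · have (y : ℝ) : G y z = 0 := if_neg fun h => hz (h.1.trans h.2)
      simp [hz, this]
  rw [← lintegral_indicator measurableSet_Ioi, ← lintegral_indicator measurableSet_Ioi]
  simp_rw [hL, hR]
  exact lintegral_lintegral_swap hG.aemeasurable

lemma integral_integral_eq_toReal_lintegral_lintegral {α β : Type*} [MeasurableSpace α]
    [MeasurableSpace β] {μ : Measure α} {ν : Measure β} [SFinite ν] {f : α → β → ℝ}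
    (hf : Measurable (Function.uncurry f)) (hf₀ : ∀ x y, 0 ≤ f x y)
    (hfin : ∫⁻ x, ∫⁻ y, .ofReal (f x y) ∂ν ∂μ ≠ ∞) :
    ∫ x, ∫ y, f x y ∂ν ∂μ = (∫⁻ x, ∫⁻ y, .ofReal (f x y) ∂ν ∂μ).toReal := by
  have hm : Measurable fun x => ∫⁻ y, .ofReal (f x y) ∂ν :=
    (ENNReal.measurable_ofReal.comp hf).lintegral_prod_right'
  rw [← integral_toReal hm.aemeasurable (ae_lt_top hm hfin)]
  exact integral_congr_ae (ae_of_all _ fun x => integral_eq_lintegral_of_nonneg_ae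
    (ae_of_all _ (hf₀ x)) (hf.comp measurable_prodMk_left).aestronglyMeasurable)

lemma setIntegral_Ioi_mul_exp_neg_mul_sq {b : ℝ} (hb : 0 < b) :
    ∫ z in Ioi 0, z * exp (-b * z ^ 2) = (2 * b)⁻¹ := by
  have hderiv (z : ℝ) :
      HasDerivAt (fun z => -(2 * b)⁻¹ * exp (-b * z ^ 2)) (z * exp (-b * z ^ 2)) z := by
    have h : HasDerivAt (fun z : ℝ => -b * z ^ 2) (-b * (2 * z)) z :=
      ((hasDerivAt_pow 2 z).const_mul (-b)).congr_deriv (by ring)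
    exact (h.exp.const_mul _).congr_deriv (by field_simp)
  have hlim : Tendsto (fun z => -(2 * b)⁻¹ * exp (-b * z ^ 2)) atTop (𝓝 0) := by
    have h : Tendsto (fun z : ℝ => -b * z ^ 2) atTop atBot :=
      (tendsto_pow_atTop two_ne_zero).const_mul_atTop_of_neg (neg_lt_zero.2 hb)
    simpa using (tendsto_exp_atBot.comp h).const_mul (-(2 * b)⁻¹)
  rw [integral_Ioi_of_hasDerivAt_of_tendsto' (fun z _ => hderiv z)
    (integrable_mul_exp_neg_mul_sq hb).integrableOn hlim]
  simp

lemma intervalIntegrable_inv_two_sub_sq :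
    IntervalIntegrable (fun s : ℝ => (2 - s ^ 2)⁻¹) volume 0 1 := by
  refine ContinuousOn.intervalIntegrable (ContinuousOn.inv₀ (by fun_prop) fun s hs => ?_)
  rw [uIcc_of_le zero_le_one] at hs
  nlinarith [hs.1, hs.2]

lemma integral_inv_two_sub_sq :
    ∫ s in 0..1, (2 - s ^ 2)⁻¹ = log (1 + √2) / √2 := by
  have h2 : √2 ^ 2 = 2 := sq_sqrt zero_le_two
  have h1 : 1 < √2 := by rw [lt_sqrt zero_le_one]; norm_num
  have hderiv (s : ℝ) (hs : s ∈ uIcc (0 : ℝ) 1) :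
      HasDerivAt (fun s => (log (√2 + s) - log (√2 - s)) / (2 * √2)) (2 - s ^ 2)⁻¹ s := by
    rw [uIcc_of_le zero_le_one] at hs
    have hp : 0 < √2 + s := by linarith [hs.1]
    have hm : 0 < √2 - s := by linarith [hs.2]
    have := (((hasDerivAt_id s).const_add √2).log hp.ne').sub
      (((hasDerivAt_id s).const_sub √2).log hm.ne') |>.div_const (2 * √2)
    refine this.congr_deriv ?_
    rw [show (2 : ℝ) - s ^ 2 = (√2 + s) * (√2 - s) by linear_combination -h2, id]
    field_simp
    ring
  rw [intervalIntegral.integral_eq_sub_of_hasDerivAt hderiv intervalIntegrable_inv_two_sub_sq]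
  have hlog : log (√2 - 1) = -log (1 + √2) := by
    rw [← log_inv]
    congr 1
    field_simp
    nlinarith
  simp only [add_zero, sub_zero, sub_self, zero_div, hlog, add_comm √2 1]
  field_simp
  ring

lemma stdPhi_pos (z : ℝ) : 0 < stdPhi z := by
  unfold stdPhi; positivity

lemma stdPhi_neg (z : ℝ) : stdPhi (-z) = stdPhi z := by
  simp [stdPhi]

@[fun_prop]
lemma continuous_stdPhi : Continuous stdPhi := by
  unfold stdPhi; fun_prop

lemma hasDerivAt_stdPhi (z : ℝ) : HasDerivAt stdPhi (-z * stdPhi z) z := by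
  have h : HasDerivAt (fun x : ℝ => -x ^ 2 / 2) (-z) z :=
    ((hasDerivAt_pow 2 z).fun_neg.div_const 2).congr_deriv (by ring)
  exact (h.exp.const_mul _).congr_deriv (by rw [stdPhi]; ring)

lemma integrable_stdPhi : Integrable stdPhi := by
  convert (integrable_exp_neg_mul_sq (b := 1 / 2) (by norm_num)).const_mul (√(2 * π))⁻¹ using 2
  unfold stdPhi; ring_nf

lemma integrable_mul_stdPhi : Integrable fun z => z * stdPhi z := by
  convert (integrable_mul_exp_neg_mul_sq (b := 1 / 2) (by norm_num)).const_mul (√(2 * π))⁻¹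
    using 2
  unfold stdPhi; ring_nf

lemma tendsto_stdPhi_atTop : Tendsto stdPhi atTop (𝓝 0) := by
  have h : Tendsto (fun z : ℝ => -z ^ 2 / 2) atTop atBot := by
    simpa [neg_div] using (tendsto_pow_atTop two_ne_zero).atTop_div_const (zero_lt_two' ℝ)
  have h' := (tendsto_exp_atBot.comp h).const_mul (√(2 * π))⁻¹
  rwa [mul_zero] at h'

lemma setIntegral_Ioi_mul_stdPhi (z : ℝ) : ∫ t in Ioi z, t * stdPhi t = stdPhi z := by
  have h := integral_Ioi_of_hasDerivAt_of_tendsto' (a := z) (f := fun t => -stdPhi t)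
    (fun t _ => (hasDerivAt_stdPhi t).neg) (by simpa using integrable_mul_stdPhi.integrableOn)
    tendsto_stdPhi_atTop.neg
  simpa using h

lemma stdPhiBar_nonneg (z : ℝ) : 0 ≤ stdPhiBar z :=
  setIntegral_nonneg measurableSet_Ioi fun t _ => (stdPhi_pos t).le

lemma mul_stdPhiBar_le (z : ℝ) : z * stdPhiBar z ≤ stdPhi z := by
  rw [stdPhiBar, ← integral_const_mul, ← setIntegral_Ioi_mul_stdPhi z]
  refine setIntegral_mono_on (integrable_stdPhi.const_mul z).integrableOn
    integrable_mul_stdPhi.integrableOn measurableSet_Ioi fun t ht => ?_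
  exact mul_le_mul_of_nonneg_right (le_of_lt ht) (stdPhi_pos t).le

lemma hasDerivAt_stdPhiBar (z : ℝ) : HasDerivAt stdPhiBar (-stdPhi z) z := by
  have h : stdPhiBar = fun u => stdPhiBar 0 - ∫ t in 0..u, stdPhi t := by
    ext u
    rw [← intervalIntegral.integral_Ioi_sub_Ioi' integrable_stdPhi.integrableOn
      integrable_stdPhi.integrableOn, stdPhiBar, stdPhiBar]
    ring
  rw [h]
  exact ((continuous_stdPhi.integral_hasStrictDerivAt 0 z).hasDerivAt.const_sub _)

@[fun_prop]
lemma continuous_stdPhiBar : Continuous stdPhiBar :=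
  continuous_iff_continuousAt.2 fun z => (hasDerivAt_stdPhiBar z).continuousAt

lemma antitoneOn_stdPhi : AntitoneOn stdPhi (Ici 0) := by
  intro t ht z _ htz
  unfold stdPhi
  gcongr

@[fun_prop]
lemma continuous_inv_stdPhi : Continuous fun t => (stdPhi t)⁻¹ :=
  continuous_stdPhi.inv₀ fun t => (stdPhi_pos t).ne'

noncomputable def invStdPhiIntegral (z : ℝ) : ℝ := ∫ t in 0..z, (stdPhi t)⁻¹

lemma hasDerivAt_invStdPhiIntegral (z : ℝ) :
    HasDerivAt invStdPhiIntegral (stdPhi z)⁻¹ z :=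
  (continuous_inv_stdPhi.integral_hasStrictDerivAt 0 z).hasDerivAt

@[fun_prop]
lemma continuous_invStdPhiIntegral : Continuous invStdPhiIntegral :=
  continuous_iff_continuousAt.2 fun z => (hasDerivAt_invStdPhiIntegral z).continuousAt

lemma invStdPhiIntegral_nonneg {z : ℝ} (hz : 0 ≤ z) : 0 ≤ invStdPhiIntegral z :=
  intervalIntegral.integral_nonneg hz fun t _ => (inv_pos.2 (stdPhi_pos t)).le

lemma stdPhi_mul_invStdPhiIntegral_le {z : ℝ} (hz : 0 ≤ z) :
    stdPhi z * invStdPhiIntegral z ≤ z := by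
  have h : invStdPhiIntegral z ≤ ∫ _ in 0..z, (stdPhi z)⁻¹ :=
    intervalIntegral.integral_mono_on hz (continuous_inv_stdPhi.intervalIntegrable _ _)
      intervalIntegrable_const fun t ht =>
        inv_anti₀ (stdPhi_pos z) (antitoneOn_stdPhi ht.1 (ht.1.trans ht.2) ht.2)
  rw [intervalIntegral.integral_const, smul_eq_mul, sub_zero] at h
  calc stdPhi z * invStdPhiIntegral z ≤ stdPhi z * (z * (stdPhi z)⁻¹) :=
        mul_le_mul_of_nonneg_left h (stdPhi_pos z).le
    _ = z := by field_simp [(stdPhi_pos z).ne']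

lemma stdPhiBar_mul_invStdPhiIntegral_le_one {z : ℝ} (hz : 0 ≤ z) :
    stdPhiBar z * invStdPhiIntegral z ≤ 1 := by
  rcases hz.eq_or_lt with rfl | hz
  · simp [invStdPhiIntegral]
  have hzφ : 0 < z * stdPhi z := mul_pos hz (stdPhi_pos z)
  refine le_of_mul_le_mul_left ?_ hzφ
  calc z * stdPhi z * (stdPhiBar z * invStdPhiIntegral z)
      = (z * stdPhiBar z) * (stdPhi z * invStdPhiIntegral z) := by ring
    _ ≤ stdPhi z * z :=
        mul_le_mul (mul_stdPhiBar_le z) (stdPhi_mul_invStdPhiIntegral_le hz.le)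
          (mul_nonneg (stdPhi_pos z).le (invStdPhiIntegral_nonneg hz.le)) (stdPhi_pos z).le
    _ = z * stdPhi z * 1 := by ring

lemma integral_inv_stdPhi_two_mul_sub (z : ℝ) :
    ∫ y in 0..z, (stdPhi (2 * y - z))⁻¹ = invStdPhiIntegral z := by
  have hsymm : ∫ t in -z..0, (stdPhi t)⁻¹ = invStdPhiIntegral z := by
    simpa [stdPhi_neg, invStdPhiIntegral] using
      (intervalIntegral.integral_comp_neg (a := 0) (b := z) fun t => (stdPhi t)⁻¹).symm
  rw [intervalIntegral.integral_comp_mul_sub (fun t => (stdPhi t)⁻¹) two_ne_zero,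
    ← intervalIntegral.integral_add_adjacent_intervals (b := 0)
      (continuous_inv_stdPhi.intervalIntegrable _ _) (continuous_inv_stdPhi.intervalIntegrable _ _)]
  simp only [mul_zero, zero_sub, smul_eq_mul]
  rw [show 2 * z - z = z by ring, hsymm, invStdPhiIntegral]
  ring

lemma stdPhi_sq_mul_invStdPhiIntegral (z : ℝ) :
    stdPhi z ^ 2 * invStdPhiIntegral z =
      ∫ s in 0..1, (√(2 * π))⁻¹ * (z * exp (-(1 - s ^ 2 / 2) * z ^ 2)) := by
  have h := intervalIntegral.smul_integral_comp_mul_left (a := 0) (b := 1)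
    (fun t => (stdPhi t)⁻¹) z
  rw [mul_zero, mul_one, smul_eq_mul] at h
  rw [invStdPhiIntegral, ← h, ← intervalIntegral.integral_const_mul,
    ← intervalIntegral.integral_const_mul]
  congr 1
  ext s
  simp only [stdPhi, mul_inv, inv_inv, ← exp_neg]
  field_simp
  rw [← exp_nat_mul, mul_assoc, ← exp_add]
  ring_nf

lemma setIntegral_Ioi_stdPhi_sq_mul_invStdPhiIntegral :
    ∫ z in Ioi 0, stdPhi z ^ 2 * invStdPhiIntegral z = log (1 + √2) / (2 * √π) := by
  set c := (√(2 * π))⁻¹ with hc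
  let g : ℝ → ℝ → ℝ := fun z s => c * (z * exp (-(1 - s ^ 2 / 2) * z ^ 2))
  have hg : Continuous (Function.uncurry g) := by fun_prop
  have hinner (z : ℝ) (hz : z ∈ Ioi 0) :
      ENNReal.ofReal (stdPhi z ^ 2 * invStdPhiIntegral z) = ∫⁻ s in Ioc 0 1, .ofReal (g z s) := by
    rw [stdPhi_sq_mul_invStdPhiIntegral, intervalIntegral.integral_of_le zero_le_one,
      ofReal_integral_eq_lintegral_ofReal (by fun_prop : Continuous (g z)).integrableOn_Ioc
        (ae_of_all _ fun s => by have := hz.out.le; positivity)]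
  have houter (s : ℝ) (hs : s ∈ Ioc 0 1) :
      ∫⁻ z in Ioi 0, .ofReal (g z s) = .ofReal (c * (2 - s ^ 2)⁻¹) := by
    have hb : 0 < 1 - s ^ 2 / 2 := by nlinarith [hs.1, hs.2]
    rw [← ofReal_integral_eq_lintegral_ofReal
      ((integrable_mul_exp_neg_mul_sq hb).integrableOn.const_mul c)
      ((ae_restrict_mem measurableSet_Ioi).mono fun z hz => by have := hz.out.le; positivity),
      integral_const_mul, setIntegral_Ioi_mul_exp_neg_mul_sq hb]
    congr 2
    ring
  have hlint : ∫⁻ z in Ioi 0, .ofReal (stdPhi z ^ 2 * invStdPhiIntegral z) =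
      .ofReal (c * (log (1 + √2) / √2)) := calc
    _ = ∫⁻ z in Ioi 0, ∫⁻ s in Ioc 0 1, .ofReal (g z s) :=
        setLIntegral_congr_fun measurableSet_Ioi hinner
    _ = ∫⁻ s in Ioc 0 1, ∫⁻ z in Ioi 0, .ofReal (g z s) :=
        lintegral_lintegral_swap (ENNReal.measurable_ofReal.comp hg.measurable).aemeasurable
    _ = ∫⁻ s in Ioc 0 1, .ofReal (c * (2 - s ^ 2)⁻¹) :=
        setLIntegral_congr_fun measurableSet_Ioc houter
    _ = .ofReal (c * (log (1 + √2) / √2)) := by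
        rw [← ofReal_integral_eq_lintegral_ofReal
          (intervalIntegrable_inv_two_sub_sq.1.const_mul c)
          ((ae_restrict_mem measurableSet_Ioc).mono fun s hs => ?_),
          integral_const_mul, ← intervalIntegral.integral_of_le zero_le_one,
          integral_inv_two_sub_sq]
        have : 0 < 2 - s ^ 2 := by nlinarith [hs.1, hs.2]
        positivity
  have hval : c * (log (1 + √2) / √2) = log (1 + √2) / (2 * √π) := by
    rw [hc, sqrt_mul zero_le_two]
    field_simp
    rw [sq_sqrt zero_le_two, mul_comm]
  rw [integral_eq_lintegral_of_nonneg_ae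
      ((ae_restrict_mem measurableSet_Ioi).mono fun z hz => ?_) (by fun_prop), hlint, hval,
    ENNReal.toReal_ofReal (div_nonneg (log_nonneg (by simp)) (by positivity))]
  · have := invStdPhiIntegral_nonneg hz.out.le
    positivity

noncomputable def tailPrimitive (z : ℝ) : ℝ :=
  stdPhiBar z ^ 2 * z * invStdPhiIntegral z - 2 * stdPhi z * stdPhiBar z * invStdPhiIntegral z +
    2 * (z * stdPhiBar z - stdPhi z)

lemma hasDerivAt_tailPrimitive (z : ℝ) :
    HasDerivAt tailPrimitive (stdPhiBar z ^ 2 * (z * (stdPhi z)⁻¹ + invStdPhiIntegral z) +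
      2 * (stdPhi z ^ 2 * invStdPhiIntegral z)) z := by
  have hφ := hasDerivAt_stdPhi z
  have hΦ := hasDerivAt_stdPhiBar z
  have hΨ := hasDerivAt_invStdPhiIntegral z
  have := ((((hΦ.pow 2).mul (hasDerivAt_id z)).mul hΨ).sub
    (((hφ.const_mul 2).mul hΦ).mul hΨ)).add ((((hasDerivAt_id z).mul hΦ).sub hφ).const_mul 2)
  refine this.congr_deriv ?_
  simp only [Pi.mul_apply, Pi.pow_apply, id]
  field_simp [(stdPhi_pos z).ne']
  ring

lemma tendsto_tailPrimitive_atTop : Tendsto tailPrimitive atTop (𝓝 0) := by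
  have hsq : ∀ᶠ z : ℝ in atTop, 0 ≤ z := eventually_ge_atTop (0 : ℝ)
  have h₁ : Tendsto (fun z => stdPhiBar z ^ 2 * z * invStdPhiIntegral z) atTop (𝓝 0) := by
    refine squeeze_zero' ?_ ?_ tendsto_stdPhi_atTop
    · filter_upwards [hsq] with z hz
      have := invStdPhiIntegral_nonneg hz
      have := stdPhiBar_nonneg z
      positivity
    · filter_upwards [hsq] with z hz
      calc stdPhiBar z ^ 2 * z * invStdPhiIntegral z
          = (z * stdPhiBar z) * (stdPhiBar z * invStdPhiIntegral z) := by ring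
        _ ≤ stdPhi z * 1 :=
          mul_le_mul (mul_stdPhiBar_le z) (stdPhiBar_mul_invStdPhiIntegral_le_one hz)
            (mul_nonneg (stdPhiBar_nonneg z) (invStdPhiIntegral_nonneg hz)) (stdPhi_pos z).le
        _ = stdPhi z := mul_one _
  have h₂ : Tendsto (fun z => 2 * stdPhi z * stdPhiBar z * invStdPhiIntegral z) atTop (𝓝 0) := by
    have h2φ : Tendsto (fun z => 2 * stdPhi z) atTop (𝓝 0) := by
      simpa using tendsto_stdPhi_atTop.const_mul 2
    refine squeeze_zero' ?_ ?_ h2φ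
    · filter_upwards [hsq] with z hz
      have := invStdPhiIntegral_nonneg hz
      have := stdPhiBar_nonneg z
      have := stdPhi_pos z
      positivity
    · filter_upwards [hsq] with z hz
      have := stdPhiBar_mul_invStdPhiIntegral_le_one hz
      have := stdPhi_pos z
      nlinarith
  have h₃ : Tendsto (fun z => z * stdPhiBar z) atTop (𝓝 0) := by
    refine squeeze_zero' ?_ (Eventually.of_forall mul_stdPhiBar_le) tendsto_stdPhi_atTop
    filter_upwards [hsq] with z hz using mul_nonneg hz (stdPhiBar_nonneg z)
  have h := (h₁.sub h₂).add ((h₃.sub tendsto_stdPhi_atTop).const_mul 2)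
  rw [sub_self, mul_zero, add_zero] at h
  exact h

lemma stdPhiBar_sq_mul_nonneg {z : ℝ} (hz : 0 ≤ z) :
    0 ≤ stdPhiBar z ^ 2 * (z * (stdPhi z)⁻¹ + invStdPhiIntegral z) := by
  have := invStdPhiIntegral_nonneg hz
  have := stdPhi_pos z
  positivity

lemma stdPhi_sq_mul_invStdPhiIntegral_nonneg {z : ℝ} (hz : 0 ≤ z) :
    0 ≤ stdPhi z ^ 2 * invStdPhiIntegral z :=
  mul_nonneg (sq_nonneg _) (invStdPhiIntegral_nonneg hz)

lemma integrableOn_Ioi_deriv_tailPrimitive :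
    IntegrableOn (fun z => stdPhiBar z ^ 2 * (z * (stdPhi z)⁻¹ + invStdPhiIntegral z) +
      2 * (stdPhi z ^ 2 * invStdPhiIntegral z)) (Ioi 0) :=
  integrableOn_Ioi_deriv_of_nonneg' (fun z _ => hasDerivAt_tailPrimitive z)
    (fun _ hz => add_nonneg (stdPhiBar_sq_mul_nonneg hz.out.le)
      (mul_nonneg zero_le_two (stdPhi_sq_mul_invStdPhiIntegral_nonneg hz.out.le)))
    tendsto_tailPrimitive_atTop

lemma integrableOn_Ioi_stdPhiBar_sq_mul :
    IntegrableOn (fun z => stdPhiBar z ^ 2 * (z * (stdPhi z)⁻¹ + invStdPhiIntegral z)) (Ioi 0) :=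
  integrableOn_Ioi_deriv_tailPrimitive.mono_nonneg (Continuous.aestronglyMeasurable (by fun_prop))
    ((ae_restrict_mem measurableSet_Ioi).mono fun z hz => stdPhiBar_sq_mul_nonneg hz.out.le)
    ((ae_restrict_mem measurableSet_Ioi).mono fun z hz =>
      le_add_of_nonneg_right (mul_nonneg zero_le_two
        (stdPhi_sq_mul_invStdPhiIntegral_nonneg hz.out.le)))

lemma integrableOn_Ioi_stdPhi_sq_mul_invStdPhiIntegral :
    IntegrableOn (fun z => stdPhi z ^ 2 * invStdPhiIntegral z) (Ioi 0) := by
  have h : IntegrableOn _ (Ioi (0 : ℝ)) :=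
    (integrableOn_Ioi_deriv_tailPrimitive.sub integrableOn_Ioi_stdPhiBar_sq_mul).div_const 2
  refine h.congr_fun (fun z _ => ?_) measurableSet_Ioi
  simp only [Pi.sub_apply]
  ring

lemma setIntegral_Ioi_stdPhiBar_sq_mul :
    ∫ z in Ioi 0, stdPhiBar z ^ 2 * (z * (stdPhi z)⁻¹ + invStdPhiIntegral z) =
      (√2 - log (1 + √2)) / √π := by
  have h := integral_Ioi_of_hasDerivAt_of_tendsto' (fun z _ => hasDerivAt_tailPrimitive z)
    integrableOn_Ioi_deriv_tailPrimitive tendsto_tailPrimitive_atTop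
  rw [integral_add integrableOn_Ioi_stdPhiBar_sq_mul
      (integrableOn_Ioi_stdPhi_sq_mul_invStdPhiIntegral.const_mul 2), integral_const_mul,
    setIntegral_Ioi_stdPhi_sq_mul_invStdPhiIntegral] at h
  have h0 : tailPrimitive 0 = -2 * (√2 * √π)⁻¹ := by
    simp [tailPrimitive, invStdPhiIntegral, stdPhi, sqrt_mul zero_le_two]
  rw [h0] at h
  rw [eq_sub_iff_add_eq.2 h]
  field_simp
  linear_combination -sq_sqrt (zero_le_two : (0 : ℝ) ≤ 2)

lemma lintegral_stdPhiBar_sq_div_reflect (y : ℝ) :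
    ∫⁻ z, .ofReal (stdPhiBar (|z - y| + y) ^ 2 / stdPhi z) =
      ∫⁻ z in Ioi y, (.ofReal (stdPhiBar z ^ 2 / stdPhi z) +
        .ofReal (stdPhiBar z ^ 2 / stdPhi (2 * y - z))) := by
  rw [lintegral_eq_setLIntegral_Ioi_add_reflection (by fun_prop) y]
  refine setLIntegral_congr_fun measurableSet_Ioi fun z hz => ?_
  have hzy : |z - y| + y = z := by rw [abs_of_pos (sub_pos.2 hz)]; ring
  have hzy' : |2 * y - z - y| + y = z := by
    rw [abs_of_neg (by linarith [hz.out] : 2 * y - z - y < 0)]; ring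
  rw [hzy, hzy']

lemma setLIntegral_Ioo_stdPhiBar_sq_div {z : ℝ} (hz : 0 < z) :
    ∫⁻ y in Ioo 0 z, (.ofReal (stdPhiBar z ^ 2 / stdPhi z) +
        .ofReal (stdPhiBar z ^ 2 / stdPhi (2 * y - z))) =
      .ofReal (stdPhiBar z ^ 2 * (z * (stdPhi z)⁻¹ + invStdPhiIntegral z)) := by
  have hrefl : Continuous fun y => (stdPhi (2 * y - z))⁻¹ :=
    continuous_inv_stdPhi.comp (by fun_prop)
  have hnonneg (w : ℝ) : 0 ≤ stdPhiBar z ^ 2 * (stdPhi w)⁻¹ :=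
    mul_nonneg (sq_nonneg _) (inv_pos.2 (stdPhi_pos w)).le
  have hsum (y : ℝ) : ENNReal.ofReal (stdPhiBar z ^ 2 / stdPhi z) +
      .ofReal (stdPhiBar z ^ 2 / stdPhi (2 * y - z)) =
      .ofReal (stdPhiBar z ^ 2 * (stdPhi z)⁻¹ + stdPhiBar z ^ 2 * (stdPhi (2 * y - z))⁻¹) := by
    rw [ENNReal.ofReal_add (hnonneg _) (hnonneg _), div_eq_mul_inv, div_eq_mul_inv]
  have hreflInt :
      IntervalIntegrable (fun y => stdPhiBar z ^ 2 * (stdPhi (2 * y - z))⁻¹) volume 0 z :=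
    (continuous_const.mul hrefl).intervalIntegrable _ _
  have hcont : Continuous fun y =>
      stdPhiBar z ^ 2 * (stdPhi z)⁻¹ + stdPhiBar z ^ 2 * (stdPhi (2 * y - z))⁻¹ :=
    continuous_const.add (continuous_const.mul hrefl)
  simp_rw [hsum]
  rw [← ofReal_integral_eq_lintegral_ofReal (hcont.integrableOn_Icc.mono_set Ioo_subset_Icc_self)
      (ae_of_all _ fun y => add_nonneg (hnonneg _) (hnonneg _)),
    ← integral_Ioc_eq_integral_Ioo, ← intervalIntegral.integral_of_le hz.le,
    intervalIntegral.integral_add intervalIntegrable_const hreflInt,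
    intervalIntegral.integral_const_mul _ fun y => (stdPhi (2 * y - z))⁻¹,
    integral_inv_stdPhi_two_mul_sub]
  simp only [intervalIntegral.integral_const, sub_zero, smul_eq_mul]
  ring_nf

lemma setLIntegral_lintegral_stdPhiBar_sq_div :
    ∫⁻ y in Ioi 0, ∫⁻ z, .ofReal (stdPhiBar (|z - y| + y) ^ 2 / stdPhi z) =
      ∫⁻ z in Ioi 0, .ofReal (stdPhiBar z ^ 2 * (z * (stdPhi z)⁻¹ + invStdPhiIntegral z)) := by
  simp_rw [lintegral_stdPhiBar_sq_div_reflect]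
  rw [setLIntegral_Ioi_setLIntegral_Ioi_swap (by fun_prop)]
  exact setLIntegral_congr_fun measurableSet_Ioi fun z hz => setLIntegral_Ioo_stdPhiBar_sq_div hz

lemma setLIntegral_Ioi_ofReal_stdPhiBar_sq_mul :
    ∫⁻ z in Ioi 0, .ofReal (stdPhiBar z ^ 2 * (z * (stdPhi z)⁻¹ + invStdPhiIntegral z)) =
      .ofReal ((√2 - log (1 + √2)) / √π) := by
  rw [← setIntegral_Ioi_stdPhiBar_sq_mul, ofReal_integral_eq_lintegral_ofReal
    integrableOn_Ioi_stdPhiBar_sq_mul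
    ((ae_restrict_mem measurableSet_Ioi).mono fun z hz => stdPhiBar_sq_mul_nonneg hz.out.le)]

/-- `∫₀^∞ ∫_ℝ Φ̄(|z-y|+y)²/φ(z) dz dy = (√2 - log(1+√2))/√π`. -/
theorem stmt8 :
    (∫ y in Set.Ioi (0:ℝ), ∫ z : ℝ, stdPhiBar (|z - y| + y) ^ 2 / stdPhi z) =
      (Real.sqrt 2 - Real.log (1 + Real.sqrt 2)) / Real.sqrt Real.pi := by
  have hfin := setLIntegral_lintegral_stdPhiBar_sq_div.trans
    setLIntegral_Ioi_ofReal_stdPhiBar_sq_mul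
  rw [integral_integral_eq_toReal_lintegral_lintegral (by fun_prop)
      (fun _ z => div_nonneg (sq_nonneg _) (stdPhi_pos z).le)
      (hfin ▸ ENNReal.ofReal_ne_top), hfin, ENNReal.toReal_ofReal]
  rw [← setIntegral_Ioi_stdPhiBar_sq_mul]
  exact setIntegral_nonneg measurableSet_Ioi fun z hz => stdPhiBar_sq_mul_nonneg (le_of_lt hz)
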